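/- For every k with 2 ≤ k ≤ n−1, letting τ_k = (k, k+1) be the adjacent transposition, the matrix T P(τ_k) Tᵗ agrees with the n×n identity matrix in all entries except the 2×2 submatrix with rows and columns indexed by {n−k+1, n−k+2}, which equals R_k = [[−1/k, √(1−1/k²)], [√(1−1/k²), 1/k]]. -/

import Mathlib

/-!
The rows of `U` are pairwise orthogonal, with squared lengths `n` and `(n-m+1)(n-m+2)`, so `A`
normalizes them and `T` is orthogonal. The transposition matrix is the reflection
`P(τ_k) = 1 - w wᵀ` with `w = e_k - e_{k+1}`, hence `T P(τ_k) Tᵀ = 1 - v vᵀ` with `v = T w`.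
Only rows `n-k+1` and `n-k+2` of `U` distinguish columns `k` and `k+1`, so `v` is supported
there, with entries `-√((k+1)/k)` and `√((k-1)/k)`.
-/

open Matrix

/-- The n×n matrix `U` from the paper: first row all ones; row `m` (1-based, m≥2)
has entries −1 in columns 1,…,n−m+1, entry n−m+1 in column n−m+2, and 0 afterwards.
Indices are 0-based here, so row `i` corresponds to `m = i+1`. -/
noncomputable def Umat (n : ℕ) : Matrix (Fin n) (Fin n) ℝ :=
  Matrix.of fun i j =>
    if i.val = 0 then 1
    else if j.val < n - i.val then -1
    else if j.val = n - i.val then ((n : ℝ) - i.val)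
    else 0

/-- The diagonal matrix `A` with `A₁₁ = 1/√n` and `A_kk = 1/√((n−k+1)(n−k+2))` for k ≥ 2
(1-based `k = i+1`). -/
noncomputable def Amat (n : ℕ) : Matrix (Fin n) (Fin n) ℝ :=
  Matrix.diagonal fun i =>
    if i.val = 0 then 1 / Real.sqrt n
    else 1 / Real.sqrt (((n : ℝ) - i.val) * ((n : ℝ) - i.val + 1))

/-- The orthogonal transform `T = A U`. -/
noncomputable def Tmat (n : ℕ) : Matrix (Fin n) (Fin n) ℝ := Amat n * Umat n

/-- The permutation matrix `P(σ)` with `P(σ)_{i,j} = 1` iff `j = σ(i)`. -/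
def Pmat (n : ℕ) (σ : Equiv.Perm (Fin n)) : Matrix (Fin n) (Fin n) ℝ :=
  Matrix.of fun i j => if j = σ i then 1 else 0

section Reflection

variable {ι R : Type*} [DecidableEq ι]

lemma Equiv.Perm.permMatrix_swap [Ring R] (c₁ c₂ : ι) (h : c₁ ≠ c₂) :
    (Equiv.swap c₁ c₂).permMatrix R =
      1 - vecMulVec (Pi.single c₁ 1 - Pi.single c₂ 1) (Pi.single c₁ 1 - Pi.single c₂ 1) := by
  ext i j
  simp only [Equiv.Perm.permMatrix, PEquiv.toMatrix_apply, Equiv.toPEquiv_apply,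
    Option.mem_def, Option.some.injEq, Matrix.sub_apply, Matrix.one_apply, vecMulVec_apply,
    Pi.sub_apply, Pi.single_apply, Equiv.swap_apply_def]
  split_ifs <;> grind

lemma mul_one_sub_vecMulVec_mul_transpose [Fintype ι] [CommRing R] {X : Matrix ι ι R}
    (hX : X * Xᵀ = 1) (w : ι → R) :
    X * (1 - vecMulVec w w) * Xᵀ = 1 - vecMulVec (X *ᵥ w) (X *ᵥ w) := by
  rw [mul_sub, sub_mul, mul_one, hX, mul_vecMulVec, vecMulVec_mul, vecMul_transpose]

end Reflection

lemma Pmat_eq_permMatrix (n : ℕ) (σ : Equiv.Perm (Fin n)) : Pmat n σ = σ.permMatrix ℝ := by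
  ext i j
  simp [Pmat, eq_comm]

noncomputable def uRow (n m q : ℕ) : ℝ :=
  if m = 0 then 1
  else if q < n - m then -1
  else if q = n - m then ((n : ℝ) - m)
  else 0

lemma Umat_apply (n : ℕ) (i j : Fin n) : Umat n i j = uRow n i j := rfl

lemma uRow_zero_left (n q : ℕ) : uRow n 0 q = 1 := if_pos rfl

lemma uRow_of_lt (n m q : ℕ) (hm : m ≠ 0) (hq : q < n - m) : uRow n m q = -1 := by
  rw [uRow, if_neg hm, if_pos hq]

lemma uRow_of_eq (n m q : ℕ) (hm : m ≠ 0) (hq : q = n - m) : uRow n m q = (n : ℝ) - m := by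
  rw [uRow, if_neg hm, if_neg (by omega), if_pos hq]

lemma uRow_of_gt (n m q : ℕ) (hm : m ≠ 0) (hq : n - m < q) : uRow n m q = 0 := by
  rw [uRow, if_neg hm, if_neg (by omega), if_neg (by omega)]

lemma Finset.sum_range_eq_of_const_lt_of_zero_gt {M : Type*} [AddCommMonoid M] {n s : ℕ}
    (hs : s < n) {g : ℕ → M} {c : M} (v : M) (hlt : ∀ q < s, g q = c) (hs' : g s = v)
    (hgt : ∀ q, s < q → g q = 0) :
    ∑ q ∈ Finset.range n, g q = s • c + v := by
  rw [← Finset.sum_subset (Finset.range_subset_range.2 hs) fun q hq hq' => hgt q (by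
      simp only [Finset.mem_range] at hq hq'; omega),
    Finset.sum_range_succ, hs', Finset.sum_congr rfl fun q hq => hlt q (Finset.mem_range.1 hq),
    Finset.sum_const, Finset.card_range]

noncomputable def rowNormSq (n m : ℕ) : ℝ :=
  if m = 0 then n else ((n : ℝ) - m) * ((n : ℝ) - m + 1)

lemma sum_uRow_mul_uRow_of_le {n a b : ℕ} (hb : b < n) (hab : a ≤ b) :
    ∑ q ∈ Finset.range n, uRow n a q * uRow n b q = if a = b then rowNormSq n a else 0 := by
  rcases Nat.eq_zero_or_pos b with rfl | hb0
  · obtain rfl : a = 0 := by omega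
    simp [uRow_zero_left, rowNormSq]
  rcases eq_or_lt_of_le hab with rfl | hab
  · rw [if_pos rfl, rowNormSq, if_neg (by omega),
      Finset.sum_range_eq_of_const_lt_of_zero_gt (c := 1) (by omega : n - a < n)
        (((n : ℝ) - a) * ((n : ℝ) - a))
        (fun q hq => by rw [uRow_of_lt n a q (by omega) hq]; ring)
        (by rw [uRow_of_eq n a _ (by omega) rfl])
        (fun q hq => by rw [uRow_of_gt n a q (by omega) hq]; ring)]
    rw [nsmul_eq_mul, Nat.cast_sub hb.le]; ring
  have hleft : ∀ q ≤ n - b, uRow n a q = if a = 0 then 1 else -1 := fun q hq => by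
    split_ifs with ha
    · rw [ha, uRow_zero_left]
    · exact uRow_of_lt n a q ha (by omega)
  rw [if_neg (by omega),
    Finset.sum_range_eq_of_const_lt_of_zero_gt (c := -(if a = 0 then 1 else -1))
      (by omega : n - b < n) (-(if a = 0 then 1 else -1) * -((n : ℝ) - b))
      (fun q hq => by rw [hleft q hq.le, uRow_of_lt n b q (by omega) hq]; ring)
      (by rw [hleft _ le_rfl, uRow_of_eq n b _ (by omega) rfl]; ring)
      (fun q hq => by rw [uRow_of_gt n b q (by omega) hq]; ring)]
  rw [nsmul_eq_mul, Nat.cast_sub hb.le]; ring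

lemma Umat_mul_transpose (n : ℕ) :
    Umat n * (Umat n)ᵀ = diagonal fun i : Fin n => rowNormSq n i := by
  have hsym : ∀ a b : ℕ, ∑ q ∈ Finset.range n, uRow n a q * uRow n b q
      = ∑ q ∈ Finset.range n, uRow n b q * uRow n a q := fun a b =>
    Finset.sum_congr rfl fun q _ => mul_comm _ _
  ext i j
  rw [mul_apply, diagonal_apply]
  simp only [transpose_apply, Umat_apply]
  rw [Fin.sum_univ_eq_sum_range (fun q => uRow n i q * uRow n j q)]
  rcases eq_or_ne i j with rfl | hij
  · rw [sum_uRow_mul_uRow_of_le i.isLt le_rfl, if_pos rfl, if_pos rfl]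
  have hij' : i.val ≠ j.val := Fin.val_ne_of_ne hij
  rw [if_neg hij]
  rcases le_total i.val j.val with h | h
  · rw [sum_uRow_mul_uRow_of_le j.isLt h, if_neg hij']
  · rw [hsym, sum_uRow_mul_uRow_of_le i.isLt h, if_neg hij'.symm]

lemma rowNormSq_pos {n m : ℕ} (hm : m < n) : 0 < rowNormSq n m := by
  have : (m : ℝ) < n := by exact_mod_cast hm
  unfold rowNormSq
  split_ifs
  · linarith [m.cast_nonneg (α := ℝ)]
  · nlinarith

lemma Amat_eq_diagonal (n : ℕ) : Amat n = diagonal fun i : Fin n => 1 / √(rowNormSq n i) := by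
  unfold Amat rowNormSq
  congr 1
  ext i
  split_ifs <;> rfl

lemma Tmat_mul_transpose (n : ℕ) : Tmat n * (Tmat n)ᵀ = 1 := by
  rw [Tmat, transpose_mul, Amat_eq_diagonal, diagonal_transpose, Matrix.mul_assoc,
    ← Matrix.mul_assoc (Umat n), Umat_mul_transpose, diagonal_mul_diagonal, diagonal_mul_diagonal,
    ← diagonal_one]
  congr 1
  ext i
  have hpos := rowNormSq_pos i.isLt
  field_simp
  rw [Real.sq_sqrt hpos.le]

lemma Tmat_apply (n : ℕ) (i q : Fin n) : Tmat n i q = 1 / √(rowNormSq n i) * uRow n i q := by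
  rw [Tmat, Amat_eq_diagonal, diagonal_mul]
  rfl

lemma uRow_sub_uRow {n m k : ℕ} (hm : m < n) (hk : 1 ≤ k) (hkn : k < n) :
    uRow n m (k - 1) - uRow n m k =
      if m = n - k then -((k : ℝ) + 1) else if m = n - k + 1 then (k : ℝ) - 1 else 0 := by
  rcases Nat.eq_zero_or_pos m with rfl | hm0
  · rw [if_neg (by omega), if_neg (by omega), uRow_zero_left, uRow_zero_left, sub_self]
  split_ifs with ha hb
  · rw [uRow_of_lt n m _ (by omega) (by omega), uRow_of_eq n m _ (by omega) (by omega), ha,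
      Nat.cast_sub hkn.le]
    ring
  · rw [uRow_of_eq n m _ (by omega) (by omega), uRow_of_gt n m _ (by omega) (by omega), hb,
      Nat.cast_add, Nat.cast_sub hkn.le]
    ring
  · rcases lt_or_gt_of_ne (show n - m ≠ k - 1 by omega) with h | h
    · rw [uRow_of_gt n m _ (by omega) h, uRow_of_gt n m _ (by omega) (by omega), sub_self]
    · rw [uRow_of_lt n m _ (by omega) (by omega), uRow_of_lt n m _ (by omega) (by omega),
        sub_self]

lemma div_sqrt_mul_eq_sqrt_div {x : ℝ} (hx : 0 ≤ x) (y : ℝ) : x / √(x * y) = √(x / y) := by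
  rw [Real.sqrt_mul hx, ← div_div, Real.div_sqrt, Real.sqrt_div hx]

lemma Tmat_mulVec_single_sub_single {n k : ℕ} (hk : 1 ≤ k) (hkn : k < n) (i : Fin n) :
    (Tmat n *ᵥ (Pi.single ⟨k - 1, by omega⟩ 1 - Pi.single ⟨k, hkn⟩ 1)) i =
      if i.val = n - k then -√((k + 1) / k)
      else if i.val = n - k + 1 then √((k - 1) / k) else 0 := by
  rw [mulVec_sub, mulVec_single_one, mulVec_single_one, Pi.sub_apply, col_apply, col_apply,
    Tmat_apply, Tmat_apply, ← mul_sub, uRow_sub_uRow i.isLt hk hkn]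
  have hk1 : (1 : ℝ) ≤ k := by exact_mod_cast hk
  split_ifs with ha hb
  · have : rowNormSq n i = ((k : ℝ) + 1) * k := by
      rw [rowNormSq, if_neg (by omega), ha, Nat.cast_sub hkn.le]
      ring
    rw [this, ← div_sqrt_mul_eq_sqrt_div (by positivity)]
    ring
  · have : rowNormSq n i = ((k : ℝ) - 1) * k := by
      rw [rowNormSq, if_neg (by omega), hb, Nat.cast_add, Nat.cast_sub hkn.le]
      ring
    rw [this, ← div_sqrt_mul_eq_sqrt_div (by linarith)]
    ring
  · rw [mul_zero]

lemma Tmat_mul_Pmat_swap_mul_transpose (n : ℕ) {c₁ c₂ : Fin n} (h : c₁ ≠ c₂) :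
    Tmat n * Pmat n (Equiv.swap c₁ c₂) * (Tmat n)ᵀ =
      1 - vecMulVec (Tmat n *ᵥ (Pi.single c₁ 1 - Pi.single c₂ 1))
        (Tmat n *ᵥ (Pi.single c₁ 1 - Pi.single c₂ 1)) := by
  rw [Pmat_eq_permMatrix, Equiv.Perm.permMatrix_swap _ _ h,
    mul_one_sub_vecMulVec_mul_transpose (Tmat_mul_transpose n)]

section Block

variable {k : ℝ}

lemma one_sub_sqrt_add_one_div_mul_self (hk : 0 < k) :
    1 - -√((k + 1) / k) * -√((k + 1) / k) = -1 / k := by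
  rw [neg_mul_neg, Real.mul_self_sqrt (by positivity)]
  field_simp
  ring

lemma one_sub_sqrt_sub_one_div_mul_self (hk : 1 ≤ k) :
    1 - √((k - 1) / k) * √((k - 1) / k) = 1 / k := by
  rw [Real.mul_self_sqrt (div_nonneg (by linarith) (by linarith))]
  field_simp
  ring

lemma sqrt_add_one_div_mul_sqrt_sub_one_div (hk : 0 < k) :
    √((k + 1) / k) * √((k - 1) / k) = √(1 - 1 / k ^ 2) := by
  rw [← Real.sqrt_mul (by positivity)]
  congr 1
  field_simp
  ring

end Block

/-- For 2 ≤ k ≤ n−1 and τ_k = (k, k+1), the matrix T P(τ_k) Tᵗ agrees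
with the identity except in the 2×2 block with rows/columns n−k+1, n−k+2 (1-based),
which equals R_k = [[−1/k, √(1−1/k²)], [√(1−1/k²), 1/k]]. -/
theorem stmt_3 (n k : ℕ) (hk2 : 2 ≤ k) (hkn : k ≤ n - 1) :
    let M := Tmat n * Pmat n (Equiv.swap ⟨k - 1, by omega⟩ ⟨k, by omega⟩) * (Tmat n)ᵀ
    let a : Fin n := ⟨n - k, by omega⟩
    let b : Fin n := ⟨n - k + 1, by omega⟩
    M a a = -1 / k ∧
    M a b = Real.sqrt (1 - 1 / (k : ℝ) ^ 2) ∧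
    M b a = Real.sqrt (1 - 1 / (k : ℝ) ^ 2) ∧
    M b b = 1 / k ∧
    ∀ i j : Fin n, ¬((i = a ∨ i = b) ∧ (j = a ∨ j = b)) →
      M i j = if i = j then 1 else 0 := by
  intro M a b
  have hk1 : 1 ≤ k := by omega
  have hkn' : k < n := by omega
  set v := Tmat n *ᵥ (Pi.single ⟨k - 1, by omega⟩ 1 - Pi.single ⟨k, hkn'⟩ 1)
  have hM : ∀ i j, M i j = (if i = j then 1 else 0) - v i * v j := fun i j => by
    rw [show M = 1 - vecMulVec v v from
      Tmat_mul_Pmat_swap_mul_transpose n (by simp only [ne_eq, Fin.mk.injEq]; omega),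
      Matrix.sub_apply, Matrix.one_apply, vecMulVec_apply]
  have hva : v a = -√((k + 1) / k) := by simp [v, Tmat_mulVec_single_sub_single hk1 hkn', a]
  have hvb : v b = √((k - 1) / k) := by simp [v, Tmat_mulVec_single_sub_single hk1 hkn', b]
  have hv : ∀ i, i ≠ a → i ≠ b → v i = 0 := fun i hia hib => by
    have hia' : i.val ≠ n - k := fun h => hia (Fin.ext h)
    have hib' : i.val ≠ n - k + 1 := fun h => hib (Fin.ext h)
    simp [v, Tmat_mulVec_single_sub_single hk1 hkn', hia', hib']
  have hab : a ≠ b := by simp [a, b, Fin.ext_iff]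
  have hk : (1 : ℝ) ≤ k := by exact_mod_cast hk1
  refine ⟨?_, ?_, ?_, ?_, ?_⟩
  · rw [hM, if_pos rfl, hva, one_sub_sqrt_add_one_div_mul_self (by linarith)]
  · rw [hM, if_neg hab, hva, hvb, neg_mul, sub_neg_eq_add, zero_add,
      sqrt_add_one_div_mul_sqrt_sub_one_div (by linarith)]
  · rw [hM, if_neg hab.symm, hva, hvb, mul_neg, sub_neg_eq_add, zero_add, mul_comm,
      sqrt_add_one_div_mul_sqrt_sub_one_div (by linarith)]
  · rw [hM, if_pos rfl, hvb, one_sub_sqrt_sub_one_div_mul_self hk]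
  · intro i j hij
    rw [hM]
    rcases not_and_or.1 hij with hi | hj
    · rw [hv i (by tauto) (by tauto), zero_mul, sub_zero]
    · rw [hv j (by tauto) (by tauto), mul_zero, sub_zero]
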